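/- If independent random variables \(X_0, X_1, \ldots, X_n\) satisfy \(\mathrm{Var}(X_k) \le \mathrm{Var}(X_n) + 2(n-k)\tau C\) for each \(k\), then the variance of the exponentially weighted combination \(Y = \beta^n X_0 + (1-\beta)\sum_{i=1}^n \beta^{n-i} X_i\) satisfies \(\mathrm{Var}(Y) \le \left(\frac{(1-\beta)^2}{1-\beta^2} + \frac{2\beta^{2n+1}}{1+\beta}\right)\mathrm{Var}(X_n) + \frac{2C\beta^2\tau}{(1-\beta^2)^2}\), for \(0 \le \beta < 1\), \(\tau \ge 0\), \(C \ge 0\). -/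

import Mathlib

open MeasureTheory ProbabilityTheory

lemma geom_aux (q : ℝ) (n : ℕ) :
    (n : ℝ) * q ^ n + (1 - q) * ∑ j ∈ Finset.range n, (j : ℝ) * q ^ j
      = q * ∑ j ∈ Finset.range n, q ^ j := by
  induction n with
  | zero => simp
  | succ m ih =>
    rw [Finset.sum_range_succ, Finset.sum_range_succ]
    push_cast
    linear_combination ih

lemma geom_eq (q : ℝ) (hq : q ≠ 1) (n : ℕ) :
    ∑ j ∈ Finset.range n, q ^ j = (1 - q ^ n) / (1 - q) := by
  rw [geom_sum_eq hq]
  rw [div_eq_div_iff (sub_ne_zero.mpr hq) (sub_ne_zero.mpr (Ne.symm hq))]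
  ring

theorem rbmm_variance_bound {Ω : Type*} [MeasureSpace Ω] [IsProbabilityMeasure (ℙ : Measure Ω)]
    (n : ℕ) (X : ℕ → Ω → ℝ)
    (hindep : iIndepFun X ℙ)
    (hmeas : ∀ k, Measurable (X k))
    (hL2 : ∀ k, MemLp (X k) 2 ℙ)
    (β τ C : ℝ) (hβ0 : 0 ≤ β) (hβ1 : β < 1) (hτ : 0 ≤ τ) (hC : 0 ≤ C)
    (hvar : ∀ k ≤ n, variance (X k) ℙ ≤ variance (X n) ℙ + 2 * ((n : ℝ) - k) * τ * C) :
    variance (fun ω => β ^ n * X 0 ω + (1 - β) * ∑ i ∈ Finset.Icc 1 n, β ^ (n - i) * X i ω) ℙ ≤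
      ((1 - β) ^ 2 / (1 - β ^ 2) + 2 * β ^ (2 * n + 1) / (1 + β)) * variance (X n) ℙ +
        2 * C * β ^ 2 * τ / (1 - β ^ 2) ^ 2 := by
  classical
  have hq0 : (0:ℝ) ≤ β ^ 2 := sq_nonneg β
  have hq1 : β ^ 2 < 1 := by nlinarith
  have h1q : (0:ℝ) < 1 - β ^ 2 := by linarith
  have h1β : (0:ℝ) < 1 + β := by linarith
  set c : ℕ → ℝ := fun i => if i = 0 then β ^ n else (1 - β) * β ^ (n - i) with hcdef
  set V := variance (X n) ℙ with hVdef
  have hins : Finset.range (n + 1) = insert 0 (Finset.Icc 1 n) := by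
    ext i
    simp only [Finset.mem_range, Finset.mem_insert, Finset.mem_Icc]
    omega
  have hY : (fun ω => β ^ n * X 0 ω + (1 - β) * ∑ i ∈ Finset.Icc 1 n, β ^ (n - i) * X i ω)
      = ∑ i ∈ Finset.range (n + 1), (fun ω => c i * X i ω) := by
    funext ω
    rw [hins, Finset.sum_apply, Finset.sum_insert (by simp)]
    simp only [hcdef, if_pos rfl]
    congr 1
    rw [Finset.mul_sum]
    refine Finset.sum_congr rfl fun i hi => ?_
    have : i ≠ 0 := by simp only [Finset.mem_Icc] at hi; omega
    simp [this, mul_assoc]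
  have hvarsum : variance (fun ω => β ^ n * X 0 ω +
      (1 - β) * ∑ i ∈ Finset.Icc 1 n, β ^ (n - i) * X i ω) ℙ
      = ∑ i ∈ Finset.range (n + 1), (c i) ^ 2 * variance (X i) ℙ := by
    rw [hY, IndepFun.variance_sum]
    · exact Finset.sum_congr rfl fun i _ => variance_const_mul (c i) (X i) ℙ
    · exact fun i _ => ((hL2 i).const_mul (c i))
    · intro i hi j hj hij
      exact (hindep.indepFun hij).comp (measurable_const_mul (c i))
        (measurable_const_mul (c j))
  rw [hvarsum]
  have hstep : ∑ i ∈ Finset.range (n + 1), (c i) ^ 2 * variance (X i) ℙ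
      ≤ ∑ i ∈ Finset.range (n + 1), (c i) ^ 2 * (V + 2 * ((n : ℝ) - i) * τ * C) := by
    refine Finset.sum_le_sum fun i hi => ?_
    have hi' : i ≤ n := by simp only [Finset.mem_range] at hi; omega
    exact mul_le_mul_of_nonneg_left (hvar i hi') (sq_nonneg _)
  refine hstep.trans ?_
  have hc0 : (c 0) ^ 2 = (β ^ 2) ^ n := by
    simp only [hcdef, if_pos rfl]
    rw [← pow_mul, ← pow_mul, Nat.mul_comm]
  have hci : ∀ i ∈ Finset.Icc 1 n, (c i) ^ 2 = (1 - β) ^ 2 * (β ^ 2) ^ (n - i) := by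
    intro i hi
    have : i ≠ 0 := by simp only [Finset.mem_Icc] at hi; omega
    simp only [hcdef, if_neg this]
    rw [mul_pow, ← pow_mul, ← pow_mul, Nat.mul_comm]
  have hsplit : ∑ i ∈ Finset.range (n + 1), (c i) ^ 2 * (V + 2 * ((n : ℝ) - i) * τ * C)
      = (∑ i ∈ Finset.range (n + 1), (c i) ^ 2) * V
        + 2 * τ * C * ∑ i ∈ Finset.range (n + 1), (c i) ^ 2 * ((n : ℝ) - i) := by
    rw [Finset.sum_mul, Finset.mul_sum, ← Finset.sum_add_distrib]
    exact Finset.sum_congr rfl fun i _ => by ring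
  rw [hsplit]
  have hreindex : ∀ f : ℕ → ℝ, ∑ i ∈ Finset.Icc 1 n, f (n - i) = ∑ j ∈ Finset.range n, f j := by
    intro f
    refine Finset.sum_nbij' (fun i => n - i) (fun j => n - j) ?_ ?_ ?_ ?_ ?_
    · intro i hi; simp only [Finset.mem_Icc] at hi; simp only [Finset.mem_range]; omega
    · intro j hj; simp only [Finset.mem_range] at hj; simp only [Finset.mem_Icc]; omega
    · intro i hi; simp only [Finset.mem_Icc] at hi; show n - (n - i) = i; omega
    · intro j hj; simp only [Finset.mem_range] at hj; show n - (n - j) = j; omega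
    · intro i _; rfl
  have hgeom : ∑ j ∈ Finset.range n, (β ^ 2) ^ j = (1 - (β ^ 2) ^ n) / (1 - β ^ 2) :=
    geom_eq _ (by linarith) n
  -- A equals the target coefficient
  have hA : ∑ i ∈ Finset.range (n + 1), (c i) ^ 2
      = (1 - β) ^ 2 / (1 - β ^ 2) + 2 * β ^ (2 * n + 1) / (1 + β) := by
    rw [hins, Finset.sum_insert (by simp), hc0, Finset.sum_congr rfl hci, ← Finset.mul_sum,
      hreindex (fun j => (β ^ 2) ^ j), hgeom]
    have hβn : β ^ (2 * n + 1) = β * (β ^ 2) ^ n := by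
      rw [← pow_mul, pow_succ, Nat.mul_comm, mul_comm]
    rw [hβn]
    field_simp
    ring
  -- B bound
  have hcast : ∀ i ∈ Finset.Icc 1 n, ((n : ℝ) - i) = ((n - i : ℕ) : ℝ) := by
    intro i hi
    simp only [Finset.mem_Icc] at hi
    rw [Nat.cast_sub hi.2]
  have hB : ∑ i ∈ Finset.range (n + 1), (c i) ^ 2 * ((n : ℝ) - i)
      ≤ β ^ 2 / (1 - β ^ 2) ^ 2 := by
    have hBeq : ∑ i ∈ Finset.range (n + 1), (c i) ^ 2 * ((n : ℝ) - i)
        = (β ^ 2) ^ n * n + (1 - β) ^ 2 * ∑ j ∈ Finset.range n, (j : ℝ) * (β ^ 2) ^ j := by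
      rw [hins, Finset.sum_insert (by simp), hc0]
      congr 1
      · simp
      rw [Finset.sum_congr rfl (fun i hi => by
        rw [hci i hi, hcast i hi, mul_assoc]), ← Finset.mul_sum]
      congr 1
      exact (hreindex (fun j => (β ^ 2) ^ j * (j : ℝ))).trans
        (Finset.sum_congr rfl fun j _ => by ring)
    rw [hBeq]
    have hS0 : 0 ≤ ∑ j ∈ Finset.range n, (j : ℝ) * (β ^ 2) ^ j :=
      Finset.sum_nonneg fun j _ => mul_nonneg (Nat.cast_nonneg j) (pow_nonneg hq0 j)
    have h1 : (1 - β) ^ 2 ≤ 1 - β ^ 2 := by nlinarith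
    have h2 := geom_aux (β ^ 2) n
    have h3 : ∑ j ∈ Finset.range n, (β ^ 2) ^ j ≤ 1 / (1 - β ^ 2) := by
      rw [hgeom]
      have : (0:ℝ) ≤ (β ^ 2) ^ n := pow_nonneg hq0 n
      rw [div_le_div_iff₀ h1q h1q]
      nlinarith
    have h4 : β ^ 2 * ∑ j ∈ Finset.range n, (β ^ 2) ^ j ≤ β ^ 2 / (1 - β ^ 2) := by
      calc β ^ 2 * ∑ j ∈ Finset.range n, (β ^ 2) ^ j ≤ β ^ 2 * (1 / (1 - β ^ 2)) :=
            mul_le_mul_of_nonneg_left h3 hq0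
        _ = β ^ 2 / (1 - β ^ 2) := by ring
    have h5 : β ^ 2 / (1 - β ^ 2) ≤ β ^ 2 / (1 - β ^ 2) ^ 2 := by
      rw [div_le_div_iff₀ h1q (by positivity)]
      nlinarith [mul_nonneg (mul_nonneg hq0 hq0) h1q.le]
    nlinarith
  calc (∑ i ∈ Finset.range (n + 1), (c i) ^ 2) * V
        + 2 * τ * C * ∑ i ∈ Finset.range (n + 1), (c i) ^ 2 * ((n : ℝ) - i)
      ≤ (∑ i ∈ Finset.range (n + 1), (c i) ^ 2) * V
        + 2 * τ * C * (β ^ 2 / (1 - β ^ 2) ^ 2) :=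
        add_le_add_right (mul_le_mul_of_nonneg_left hB (by positivity)) _
    _ = ((1 - β) ^ 2 / (1 - β ^ 2) + 2 * β ^ (2 * n + 1) / (1 + β)) * V
        + 2 * C * β ^ 2 * τ / (1 - β ^ 2) ^ 2 := by rw [hA]; ring
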